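/- arXiv:2008.09216 — 12 statements merged into one kernel-verified Lean document; each statement's English description precedes it below -/
import Mathlib

section
/- Let e be a positive non-square integer. Then there do not exist integers a₁, b₁, a₂, b₂ and integers m₁, m₂ > 1 such that a₁ > 0, a₁² − e·b₁² > 0, a₂ > 0, a₂² − e·b₂² > 0, and the three equations 2a₁² − 2e·b₁² = m₁² − 1, 2a₂² − 2e·b₂² = m₂² − 1, and 2a₁a₂ − 2e·b₁b₂ = m₁·m₂ all hold. -/
/-! The intersection form is even, so `m₁² - 1` and `m₂² - 1` are even, i.e. `m₁` and `m₂` are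
odd; but then `L₁·L₂ = m₁m₂` would be an even odd number. -/

lemma Int.odd_of_two_mul_eq_sq_sub_one {x m : ℤ} (h : 2 * x = m ^ 2 - 1) : Odd m :=
  (Int.odd_pow' two_ne_zero).mp ⟨x, by linarith⟩

theorem no_two_submaximal_case1_general (e : ℤ) :
    ¬ ∃ (a₁ b₁ a₂ b₂ m₁ m₂ : ℤ), 1 < m₁ ∧ 1 < m₂ ∧
      0 < a₁ ∧ 0 < a₁ ^ 2 - e * b₁ ^ 2 ∧
      0 < a₂ ∧ 0 < a₂ ^ 2 - e * b₂ ^ 2 ∧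
      2 * a₁ ^ 2 - 2 * e * b₁ ^ 2 = m₁ ^ 2 - 1 ∧
      2 * a₂ ^ 2 - 2 * e * b₂ ^ 2 = m₂ ^ 2 - 1 ∧
      2 * a₁ * a₂ - 2 * e * b₁ * b₂ = m₁ * m₂ := by
  rintro ⟨a₁, b₁, a₂, b₂, m₁, m₂, -, -, -, -, -, -, h₁, h₂, h₁₂⟩
  have hm₁ : Odd m₁ := Int.odd_of_two_mul_eq_sq_sub_one (x := a₁ ^ 2 - e * b₁ ^ 2) (by linarith)
  have hm₂ : Odd m₂ := Int.odd_of_two_mul_eq_sq_sub_one (x := a₂ ^ 2 - e * b₂ ^ 2) (by linarith)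
  have heven : Even (m₁ * m₂) := ⟨a₁ * a₂ - e * b₁ * b₂, by linarith⟩
  exact Int.not_even_iff_odd.mpr (hm₁.mul hm₂) heven

/-- On a principally polarized abelian surface with `End(X) = ℤ[√e]` (e > 0 non-square),
two ample classes `Lᵢ = aᵢL₀ + bᵢL_∞` can never satisfy `L₁² = m₁² - 1`, `L₂² = m₂² - 1`
and `L₁·L₂ = m₁m₂` with `m₁, m₂ > 1`. -/
theorem no_two_submaximal_case1 (e : ℤ) (he : 0 < e) (hns : ¬ IsSquare e) :
    ¬ ∃ (a₁ b₁ a₂ b₂ m₁ m₂ : ℤ), 1 < m₁ ∧ 1 < m₂ ∧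
      0 < a₁ ∧ 0 < a₁ ^ 2 - e * b₁ ^ 2 ∧
      0 < a₂ ∧ 0 < a₂ ^ 2 - e * b₂ ^ 2 ∧
      2 * a₁ ^ 2 - 2 * e * b₁ ^ 2 = m₁ ^ 2 - 1 ∧
      2 * a₂ ^ 2 - 2 * e * b₂ ^ 2 = m₂ ^ 2 - 1 ∧
      2 * a₁ * a₂ - 2 * e * b₁ * b₂ = m₁ * m₂ :=
  no_two_submaximal_case1_general e
end

section
/- Let e be a positive integer with e ≡ 1 (mod 4) that has a prime factor p with p ≡ 5 (mod 8) or p ≡ 7 (mod 8). Then there do not exist integers a₁, b₁, m₁, a₂, b₂, m₂ such that 4a₁² + 4a₁b₁ + (1−e)b₁² = 2m₁² − 2, 4a₂² + 4a₂b₂ + (1−e)b₂² = 2m₂² − 2, and 4a₁a₂ + 2a₁b₂ + 2a₂b₁ + (1−e)b₁b₂ = 2m₁m₂ all hold. -/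
/-!
Put `c = a₁b₂ − a₂b₁`, `s = (2a₁ + b₁)m₂ − (2a₂ + b₂)m₁` and `t = b₁m₂ − b₂m₁`.
Eliminating the quadratic form between the three equations gives `e c² = m₁² + m₂² − 1`
and then `s² + 2 = e (t² − 2c²)`. So `−2` is a square modulo every prime factor `p` of `e`,
which by the second supplement to quadratic reciprocity forces `p ≡ 1, 3 (mod 8)`.
-/

theorem mul_sq_det_eq_of_submaximal_equations {E a₁ b₁ m₁ a₂ b₂ m₂ : ℤ}
    (h₁ : 4 * a₁ ^ 2 + 4 * a₁ * b₁ + (1 - E) * b₁ ^ 2 = 2 * m₁ ^ 2 - 2)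
    (h₂ : 4 * a₂ ^ 2 + 4 * a₂ * b₂ + (1 - E) * b₂ ^ 2 = 2 * m₂ ^ 2 - 2)
    (h₁₂ : 4 * a₁ * a₂ + 2 * a₁ * b₂ + 2 * a₂ * b₁ + (1 - E) * b₁ * b₂ = 2 * m₁ * m₂) :
    E * (a₁ * b₂ - a₂ * b₁) ^ 2 = m₁ ^ 2 + m₂ ^ 2 - 1 := by
  have h : 4 * (E * (a₁ * b₂ - a₂ * b₁) ^ 2) = 4 * (m₁ ^ 2 + m₂ ^ 2 - 1) := by
    linear_combination
      (4 * a₁ * a₂ + 2 * a₁ * b₂ + 2 * a₂ * b₁ + (1 - E) * b₁ * b₂ + 2 * m₁ * m₂) * h₁₂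
        - (4 * a₂ ^ 2 + 4 * a₂ * b₂ + (1 - E) * b₂ ^ 2) * h₁ - (2 * m₁ ^ 2 - 2) * h₂
  exact mul_left_cancel₀ four_ne_zero h

theorem sq_add_two_eq_of_submaximal_equations {E a₁ b₁ m₁ a₂ b₂ m₂ : ℤ}
    (h₁ : 4 * a₁ ^ 2 + 4 * a₁ * b₁ + (1 - E) * b₁ ^ 2 = 2 * m₁ ^ 2 - 2)
    (h₂ : 4 * a₂ ^ 2 + 4 * a₂ * b₂ + (1 - E) * b₂ ^ 2 = 2 * m₂ ^ 2 - 2)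
    (h₁₂ : 4 * a₁ * a₂ + 2 * a₁ * b₂ + 2 * a₂ * b₁ + (1 - E) * b₁ * b₂ = 2 * m₁ * m₂) :
    ((2 * a₁ + b₁) * m₂ - (2 * a₂ + b₂) * m₁) ^ 2 + 2 =
      E * ((b₁ * m₂ - b₂ * m₁) ^ 2 - 2 * (a₁ * b₂ - a₂ * b₁) ^ 2) := by
  linear_combination m₂ ^ 2 * h₁ + m₁ ^ 2 * h₂ - 2 * m₁ * m₂ * h₁₂
    + 2 * mul_sq_det_eq_of_submaximal_equations h₁ h₂ h₁₂

theorem Nat.Prime.mod_eight_of_dvd_sq_add_two {p : ℕ} (hp : p.Prime) (hp2 : p ≠ 2) {s : ℤ}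
    (hdvd : (p : ℤ) ∣ s ^ 2 + 2) : p % 8 = 1 ∨ p % 8 = 3 := by
  have : Fact p.Prime := ⟨hp⟩
  rw [← ZMod.exists_sq_eq_neg_two_iff hp2]
  have hzero : ((s : ZMod p)) ^ 2 + 2 = 0 := by
    exact_mod_cast (ZMod.intCast_zmod_eq_zero_iff_dvd _ p).mpr hdvd
  exact ⟨s, by linear_combination -hzero⟩

theorem no_two_submaximal_case2_general (e : ℕ)
    (hp : ∃ p : ℕ, p.Prime ∧ p ∣ e ∧ (p % 8 = 5 ∨ p % 8 = 7)) :
    ¬ ∃ (a₁ b₁ m₁ a₂ b₂ m₂ : ℤ),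
      4 * a₁ ^ 2 + 4 * a₁ * b₁ + (1 - (e : ℤ)) * b₁ ^ 2 = 2 * m₁ ^ 2 - 2 ∧
      4 * a₂ ^ 2 + 4 * a₂ * b₂ + (1 - (e : ℤ)) * b₂ ^ 2 = 2 * m₂ ^ 2 - 2 ∧
      4 * a₁ * a₂ + 2 * a₁ * b₂ + 2 * a₂ * b₁ + (1 - (e : ℤ)) * b₁ * b₂ = 2 * m₁ * m₂ := by
  rintro ⟨a₁, b₁, m₁, a₂, b₂, m₂, h₁, h₂, h₁₂⟩
  obtain ⟨p, hpp, hpe, hp57⟩ := hp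
  have hdvd : (p : ℤ) ∣ ((2 * a₁ + b₁) * m₂ - (2 * a₂ + b₂) * m₁) ^ 2 + 2 := by
    rw [sq_add_two_eq_of_submaximal_equations h₁ h₂ h₁₂]
    exact dvd_mul_of_dvd_left (Int.natCast_dvd_natCast.mpr hpe) _
  have hp2 : p ≠ 2 := by rintro rfl; omega
  have := hpp.mod_eight_of_dvd_sq_add_two hp2 hdvd
  omega

/-- On a principally polarized abelian surface with `End(X) = ℤ[(1+√e)/2]`, where the
positive integer `e ≡ 1 (mod 4)` has a prime factor `p ≡ 5` or `7 (mod 8)`, the three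
intersection-theoretic equations for two submaximal classes have no integer solution. -/
theorem no_two_submaximal_case2 (e : ℕ) (he : 0 < e) (hmod : e % 4 = 1)
    (hp : ∃ p : ℕ, p.Prime ∧ p ∣ e ∧ (p % 8 = 5 ∨ p % 8 = 7)) :
    ¬ ∃ (a₁ b₁ m₁ a₂ b₂ m₂ : ℤ),
      4 * a₁ ^ 2 + 4 * a₁ * b₁ + (1 - (e : ℤ)) * b₁ ^ 2 = 2 * m₁ ^ 2 - 2 ∧
      4 * a₂ ^ 2 + 4 * a₂ * b₂ + (1 - (e : ℤ)) * b₂ ^ 2 = 2 * m₂ ^ 2 - 2 ∧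
      4 * a₁ * a₂ + 2 * a₁ * b₂ + 2 * a₂ * b₁ + (1 - (e : ℤ)) * b₁ * b₂ = 2 * m₁ * m₂ :=
  no_two_submaximal_case2_general e hp
end

section
/- Let p be an odd prime and let c₁, m₁, c₂, m₂ be elements of the field 𝔽_p = ZMod p satisfying c₁² − 2m₁² = −2, c₂² − 2m₂² = −2, and c₁c₂ − 2m₁m₂ = 0. Then −2 is a square in 𝔽_p. -/
/-! With `x = c₁m₂ − c₂m₁`, multiplicativity of the norm form `c² − 2m²` of `ℤ[√2]` turns the
three relations into `(−2)(−2) = 0² − 2x²`, i.e. `2(x² + 2) = 0`. In a ring without zero divisors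
either `2 = 0`, and then `−2 = 0` is a square, or `x² = −2`. -/

theorem sq_sub_two_mul_sq_mul_sq_sub_two_mul_sq {R : Type*} [CommRing R] (a b c d : R) :
    (a ^ 2 - 2 * b ^ 2) * (c ^ 2 - 2 * d ^ 2) =
      (a * c - 2 * b * d) ^ 2 - 2 * (a * d - c * b) ^ 2 := by
  ring

theorem isSquare_neg_two_of_orthogonal_norm_neg_two {R : Type*} [CommRing R] [NoZeroDivisors R]
    {c₁ m₁ c₂ m₂ : R} (h1 : c₁ ^ 2 - 2 * m₁ ^ 2 = -2) (h2 : c₂ ^ 2 - 2 * m₂ ^ 2 = -2)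
    (h3 : c₁ * c₂ - 2 * m₁ * m₂ = 0) :
    IsSquare (-2 : R) := by
  have norm_mul := sq_sub_two_mul_sq_mul_sq_sub_two_mul_sq c₁ m₁ c₂ m₂
  rw [h1, h2, h3] at norm_mul
  set x := c₁ * m₂ - c₂ * m₁
  have h : 2 * (x ^ 2 + 2) = 0 := by linear_combination norm_mul
  rcases mul_eq_zero.mp h with two_eq_zero | hx
  · exact ⟨0, by linear_combination -two_eq_zero⟩
  · exact ⟨x, by linear_combination -hx⟩

theorem neg_two_is_square_of_relations_general (p : ℕ) [Fact p.Prime]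
    (c₁ m₁ c₂ m₂ : ZMod p)
    (h1 : c₁ ^ 2 - 2 * m₁ ^ 2 = -2)
    (h2 : c₂ ^ 2 - 2 * m₂ ^ 2 = -2)
    (h3 : c₁ * c₂ - 2 * m₁ * m₂ = 0) :
    IsSquare (-2 : ZMod p) :=
  isSquare_neg_two_of_orthogonal_norm_neg_two h1 h2 h3

/-- If `c₁² - 2m₁² = -2`, `c₂² - 2m₂² = -2` and `c₁c₂ - 2m₁m₂ = 0` in `𝔽_p` for an odd
prime `p`, then `-2` is a square in `𝔽_p`. -/
theorem neg_two_is_square_of_relations (p : ℕ) [Fact p.Prime] (hp : p ≠ 2)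
    (c₁ m₁ c₂ m₂ : ZMod p)
    (h1 : c₁ ^ 2 - 2 * m₁ ^ 2 = -2)
    (h2 : c₂ ^ 2 - 2 * m₂ ^ 2 = -2)
    (h3 : c₁ * c₂ - 2 * m₁ * m₂ = 0) :
    IsSquare (-2 : ZMod p) :=
  neg_two_is_square_of_relations_general p c₁ m₁ c₂ m₂ h1 h2 h3
end

section
/- Let e ≥ 1 be an integer, p an integer, and q, l, k positive integers such that D := 2q² − 2e·p² > 0 and l² − D·k² = 1, and set λ = p/q (a real number). Then the set { t ∈ ℝ : 2 − 2e·t² > 0 and (k·q·(2 − 2e·λ·t))/l < √(2 − 2e·t²) } is exactly the open interval ( (2e·k²q²·λ − l·√e)/(e·(2k²q² + 1)), (2e·k²q²·λ + l·√e)/(e·(2k²q² + 1)) ). -/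
/-!
Put `L_t² = 2 - 2et²` and `L_λ·L_t = 2 - 2eλt`, and write `a = kq`, so that the Pell equation
reads `l² = 1 + a² L_λ²`. Ample classes pair positively (`(eλt)² = (eλ²)(et²) < 1`), so on the
ample range the Pell bound `a L_λ·L_t / l` is nonnegative and `a L_λ·L_t / l < √(L_t²)` becomes
the quadratic inequality `a² (L_λ·L_t)² < l² L_t²`. Using the Pell equation, this quadratic in `t`
is, up to the factor `m / 2` with `m = e(2a² + 1)`, the difference `e l² - (m t - 2ea²λ)²`, whose
positivity is exactly the stated open interval around `2ea²λ / m` of radius `l√e / m`.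
-/

open Set

namespace PellBound

variable {e lam a l t : ℝ}

lemma mul_mul_lt_one (he : 0 ≤ e) (hlam : e * lam ^ 2 ≤ 1) (ht : e * t ^ 2 < 1) :
    e * lam * t < 1 := by
  have hsq : (e * lam * t) ^ 2 < 1 ^ 2 := by
    calc (e * lam * t) ^ 2 = (e * lam ^ 2) * (e * t ^ 2) := by ring
      _ ≤ 1 * (e * t ^ 2) := by gcongr
      _ < 1 ^ 2 := by linarith
  exact (abs_lt_of_sq_lt_sq' hsq zero_le_one).2

lemma pos_and_div_lt_sqrt_iff {A y : ℝ} (hA : 0 < y → 0 ≤ A) (hl : 0 < l) :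
    (0 < y ∧ A / l < √y) ↔ A ^ 2 < l ^ 2 * y := by
  have hdiv : (A / l) ^ 2 < y ↔ A ^ 2 < l ^ 2 * y := by
    rw [div_pow, div_lt_iff₀ (by positivity), mul_comm]
  constructor
  · rintro ⟨hy, hlt⟩
    exact hdiv.1 ((Real.lt_sqrt (div_nonneg (hA hy) hl.le)).1 hlt)
  · intro h
    have hy : 0 < y := pos_of_mul_pos_right ((sq_nonneg A).trans_lt h) (sq_nonneg l)
    exact ⟨hy, (Real.lt_sqrt (div_nonneg (hA hy) hl.le)).2 (hdiv.2 h)⟩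

lemma mem_Ioo_div_iff_sq_lt {c r m : ℝ} (hm : 0 < m) (hr : 0 ≤ r) :
    t ∈ Ioo ((c - r) / m) ((c + r) / m) ↔ (m * t - c) ^ 2 < r ^ 2 := by
  rw [mem_Ioo, div_lt_iff₀ hm, lt_div_iff₀ hm, sq_lt_sq, abs_of_nonneg hr, abs_sub_lt_iff]
  constructor <;> rintro ⟨h₁, h₂⟩ <;> constructor <;> linarith

lemma sq_sub_sq_eq_of_pell (he : 0 ≤ e) (hpell : l ^ 2 = 1 + a ^ 2 * (2 - 2 * e * lam ^ 2)) :
    (l * √e) ^ 2 - (e * (2 * a ^ 2 + 1) * t - 2 * e * a ^ 2 * lam) ^ 2 =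
      e * (2 * a ^ 2 + 1) / 2 *
        (l ^ 2 * (2 - 2 * e * t ^ 2) - (a * (2 - 2 * e * lam * t)) ^ 2) := by
  rw [mul_pow, Real.sq_sqrt he]
  linear_combination (e - e * (2 * a ^ 2 + 1) * (1 - e * t ^ 2)) * hpell

theorem setOf_pell_bound_lt_sqrt_eq_Ioo (he : 0 < e) (ha : 0 ≤ a) (hl : 0 < l)
    (hlam : e * lam ^ 2 ≤ 1) (hpell : l ^ 2 = 1 + a ^ 2 * (2 - 2 * e * lam ^ 2)) :
    {t : ℝ | 0 < 2 - 2 * e * t ^ 2 ∧ a * (2 - 2 * e * lam * t) / l < √(2 - 2 * e * t ^ 2)} =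
      Ioo ((2 * e * a ^ 2 * lam - l * √e) / (e * (2 * a ^ 2 + 1)))
        ((2 * e * a ^ 2 * lam + l * √e) / (e * (2 * a ^ 2 + 1))) := by
  have hm : 0 < e * (2 * a ^ 2 + 1) := by positivity
  ext t
  have hbound_nonneg : 0 < 2 - 2 * e * t ^ 2 → 0 ≤ a * (2 - 2 * e * lam * t) := fun ht =>
    mul_nonneg ha (by linarith [mul_mul_lt_one he.le hlam (by linarith : e * t ^ 2 < 1)])
  rw [mem_ofPred_eq, pos_and_div_lt_sqrt_iff hbound_nonneg hl,
    mem_Ioo_div_iff_sq_lt hm (by positivity), ← sub_pos, ← sub_pos (a := (l * √e) ^ 2),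
    sq_sub_sq_eq_of_pell he.le hpell, mul_pos_iff_of_pos_left (half_pos hm)]

end PellBound

/-- Interval-borders lemma, Case 1 (`End(X) = ℤ[√e]`): the submaximality interval of the
Pell bound `π_λ(t) = kq(2 - 2eλt)/l`, `λ = p/q`, is the explicit open interval
`((2ek²q²λ - l√e)/(e(2k²q²+1)), (2ek²q²λ + l√e)/(e(2k²q²+1)))`. -/
theorem pell_bound_interval_case1 (e p q l k : ℤ) (he : 1 ≤ e)
    (hq : 0 < q) (hl : 0 < l) (hk : 0 < k)
    (hD : 0 < 2 * q ^ 2 - 2 * e * p ^ 2)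
    (hPell : l ^ 2 - (2 * q ^ 2 - 2 * e * p ^ 2) * k ^ 2 = 1) :
    {t : ℝ | 0 < 2 - 2 * (e : ℝ) * t ^ 2 ∧
        ((k : ℝ) * q * (2 - 2 * (e : ℝ) * ((p : ℝ) / (q : ℝ)) * t)) / (l : ℝ) <
          Real.sqrt (2 - 2 * (e : ℝ) * t ^ 2)} =
      Set.Ioo
        ((2 * (e : ℝ) * (k : ℝ) ^ 2 * (q : ℝ) ^ 2 * ((p : ℝ) / (q : ℝ)) -
            (l : ℝ) * Real.sqrt (e : ℝ)) / ((e : ℝ) * (2 * (k : ℝ) ^ 2 * (q : ℝ) ^ 2 + 1)))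
        ((2 * (e : ℝ) * (k : ℝ) ^ 2 * (q : ℝ) ^ 2 * ((p : ℝ) / (q : ℝ)) +
            (l : ℝ) * Real.sqrt (e : ℝ)) / ((e : ℝ) * (2 * (k : ℝ) ^ 2 * (q : ℝ) ^ 2 + 1))) := by
  have hq' : (q : ℝ) ≠ 0 := by positivity
  have hD' : (0 : ℝ) < 2 * q ^ 2 - 2 * e * p ^ 2 := by exact_mod_cast hD
  have hPell' : (l : ℝ) ^ 2 - (2 * q ^ 2 - 2 * e * p ^ 2) * k ^ 2 = 1 := by exact_mod_cast hPell
  have hlam : (e : ℝ) * (p / q) ^ 2 ≤ 1 := by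
    rw [div_pow, mul_div_assoc', div_le_one (by positivity)]
    linarith
  have hpell : (l : ℝ) ^ 2 = 1 + (k * q) ^ 2 * (2 - 2 * e * (p / q) ^ 2) := by
    field_simp
    linear_combination hPell'
  convert PellBound.setOf_pell_bound_lt_sqrt_eq_Ioo (by exact_mod_cast he) (by positivity)
    (by exact_mod_cast hl) hlam hpell using 3 <;> ring
end

section
/- Let e ≥ 5 be an integer with e ≡ 1 (mod 4), p an integer, and q, l, k positive integers such that D := 2q² + 2pq + ((1−e)/2)·p² > 0 and l² − D·k² = 1, and set λ = p/q (a real number). Then the set { t ∈ ℝ : 2 + 2t + ((1−e)/2)·t² > 0 and (k·q·(2 + λ + t + ((1−e)/2)·λ·t))/l < √(2 + 2t + ((1−e)/2)·t²) } is exactly the open interval ( (2 + 2e·k²q²·λ − 2l·√e)/((e−1) + 2e·k²q²), (2 + 2e·k²q²·λ + 2l·√e)/((e−1) + 2e·k²q²) ). -/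
/-!
Write `F(t) = L_t²` and `B(s, t) = L_s · L_t`. The intersection form on the span of `L₀, L_∞` has
Gram determinant `-e`, so `B(s, t)² - F(s) F(t) = e (t - s)²`. Combined with the Pell equation
`l² - (kq)² F(λ) = 1` this turns `l² F(t) - (kq)² B(λ, t)²` into `F(t) - e (kq)² (t - λ)²`, a
quadratic in `t` whose discriminant is again controlled by the Pell equation: its roots are the
stated endpoints. Squaring is harmless because `B(λ, t) > 0` whenever `F(λ), F(t) > 0`.
-/

open Set

namespace PellBound

/-- `L_s · L_t`, where `L_t = L₀ + t L_∞`, `L₀² = 2`, `L₀ · L_∞ = 1` and `L_∞² = (1 - e) / 2`. -/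
noncomputable def intersection (e s t : ℝ) : ℝ := 2 + s + t + ((1 - e) / 2) * s * t

noncomputable def selfIntersection (e t : ℝ) : ℝ := 2 + 2 * t + ((1 - e) / 2) * t ^ 2

variable {e s t : ℝ}

lemma sq_intersection_sub_mul_selfIntersection :
    intersection e s t ^ 2 - selfIntersection e s * selfIntersection e t = e * (t - s) ^ 2 := by
  unfold intersection selfIntersection; ring

lemma two_mul_intersection :
    2 * intersection e s t =
      selfIntersection e s + selfIntersection e t + (e - 1) / 2 * (t - s) ^ 2 := by
  unfold intersection selfIntersection; ring

lemma intersection_pos (he : 1 ≤ e) (hs : 0 < selfIntersection e s)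
    (ht : 0 < selfIntersection e t) : 0 < intersection e s t := by
  have : 0 ≤ (e - 1) / 2 * (t - s) ^ 2 := by
    apply mul_nonneg <;> [linarith; positivity]
  linarith [two_mul_intersection (e := e) (s := s) (t := t)]

lemma sq_mul_selfIntersection_div {p q : ℝ} (hq : q ≠ 0) :
    q ^ 2 * selfIntersection e (p / q) = 2 * q ^ 2 + 2 * p * q + ((1 - e) / 2) * p ^ 2 := by
  unfold selfIntersection; field_simp

variable {m l : ℝ}

lemma sq_mul_selfIntersection_sub_sq_mul_sq_intersection
    (hPell : l ^ 2 - m ^ 2 * selfIntersection e s = 1) :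
    l ^ 2 * selfIntersection e t - m ^ 2 * intersection e s t ^ 2 =
      selfIntersection e t - e * m ^ 2 * (t - s) ^ 2 := by
  linear_combination selfIntersection e t * hPell -
    m ^ 2 * sq_intersection_sub_mul_selfIntersection (e := e) (s := s) (t := t)

lemma two_mul_selfIntersection_sub_mul_sq :
    2 * ((e - 1) + 2 * e * m ^ 2) * (selfIntersection e t - e * m ^ 2 * (t - s) ^ 2) =
      4 * e * (1 + m ^ 2 * selfIntersection e s) -
        (((e - 1) + 2 * e * m ^ 2) * t - (2 + 2 * e * m ^ 2 * s)) ^ 2 := by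
  unfold selfIntersection; ring

lemma sq_mul_sub_lt_sq_iff {a c r : ℝ} (ha : 0 < a) (hr : 0 ≤ r) :
    (a * t - c) ^ 2 < r ^ 2 ↔ t ∈ Ioo ((c - r) / a) ((c + r) / a) := by
  rw [sq_lt_sq, abs_of_nonneg hr, abs_lt, mem_Ioo, div_lt_iff₀ ha, lt_div_iff₀ ha]
  constructor <;> rintro ⟨h₁, h₂⟩ <;> constructor <;> linarith

lemma setOf_lt_sqrt_selfIntersection (he : 1 ≤ e) (hm : 0 ≤ m) (hl : 0 < l)
    (hs : 0 < selfIntersection e s) (hPell : l ^ 2 - m ^ 2 * selfIntersection e s = 1) :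
    {t | 0 < selfIntersection e t ∧ m * intersection e s t / l < √(selfIntersection e t)} =
      {t | e * m ^ 2 * (t - s) ^ 2 < selfIntersection e t} := by
  ext t
  have key := sq_mul_selfIntersection_sub_sq_mul_sq_intersection (t := t) hPell
  have hdist : 0 ≤ e * m ^ 2 * (t - s) ^ 2 := by
    have : 0 ≤ e := by linarith
    positivity
  have lt_sqrt_iff (ht : 0 < selfIntersection e t) :
      m * intersection e s t / l < √(selfIntersection e t) ↔
        m ^ 2 * intersection e s t ^ 2 < l ^ 2 * selfIntersection e t := by
    have hB := intersection_pos he hs ht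
    rw [Real.lt_sqrt (by positivity), div_pow, div_lt_iff₀ (by positivity), mul_pow,
      mul_comm (l ^ 2)]
  simp only [mem_ofPred]
  constructor
  · rintro ⟨ht, hlt⟩
    linarith [(lt_sqrt_iff ht).mp hlt]
  · intro hlt
    have ht : 0 < selfIntersection e t := by linarith
    exact ⟨ht, (lt_sqrt_iff ht).mpr (by linarith)⟩

lemma mul_sq_sub_lt_selfIntersection_iff (he : 1 < e) (hl : 0 < l)
    (hPell : l ^ 2 - m ^ 2 * selfIntersection e s = 1) :
    e * m ^ 2 * (t - s) ^ 2 < selfIntersection e t ↔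
      t ∈ Ioo ((2 + 2 * e * m ^ 2 * s - 2 * l * √e) / ((e - 1) + 2 * e * m ^ 2))
        ((2 + 2 * e * m ^ 2 * s + 2 * l * √e) / ((e - 1) + 2 * e * m ^ 2)) := by
  have hA : 0 < (e - 1) + 2 * e * m ^ 2 := by nlinarith [sq_nonneg m]
  have hroot : (2 * l * √e) ^ 2 = 4 * e * (1 + m ^ 2 * selfIntersection e s) := by
    rw [mul_pow, Real.sq_sqrt (by linarith), ← hPell]; ring
  have key := two_mul_selfIntersection_sub_mul_sq (e := e) (m := m) (s := s) (t := t)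
  rw [← sq_mul_sub_lt_sq_iff hA (by positivity), hroot]
  constructor <;> intro h <;> nlinarith

end PellBound

open PellBound in
theorem pell_bound_interval_case2_general (e p q l k : ℤ) (he : 5 ≤ e)
    (hq : 0 < q) (hl : 0 < l) (hk : 0 < k)
    (hD : 0 < 2 * (q : ℝ) ^ 2 + 2 * (p : ℝ) * (q : ℝ) + ((1 - (e : ℝ)) / 2) * (p : ℝ) ^ 2)
    (hPell : (l : ℝ) ^ 2 -
        (2 * (q : ℝ) ^ 2 + 2 * (p : ℝ) * (q : ℝ) + ((1 - (e : ℝ)) / 2) * (p : ℝ) ^ 2) *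
          (k : ℝ) ^ 2 = 1) :
    {t : ℝ | 0 < 2 + 2 * t + ((1 - (e : ℝ)) / 2) * t ^ 2 ∧
        ((k : ℝ) * (q : ℝ) *
            (2 + (p : ℝ) / (q : ℝ) + t + ((1 - (e : ℝ)) / 2) * ((p : ℝ) / (q : ℝ)) * t)) /
            (l : ℝ) <
          Real.sqrt (2 + 2 * t + ((1 - (e : ℝ)) / 2) * t ^ 2)} =
      Set.Ioo
        ((2 + 2 * (e : ℝ) * (k : ℝ) ^ 2 * (q : ℝ) ^ 2 * ((p : ℝ) / (q : ℝ)) -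
            2 * (l : ℝ) * Real.sqrt (e : ℝ)) /
          (((e : ℝ) - 1) + 2 * (e : ℝ) * (k : ℝ) ^ 2 * (q : ℝ) ^ 2))
        ((2 + 2 * (e : ℝ) * (k : ℝ) ^ 2 * (q : ℝ) ^ 2 * ((p : ℝ) / (q : ℝ)) +
            2 * (l : ℝ) * Real.sqrt (e : ℝ)) /
          (((e : ℝ) - 1) + 2 * (e : ℝ) * (k : ℝ) ^ 2 * (q : ℝ) ^ 2)) := by
  have he' : (1 : ℝ) < e := by exact_mod_cast (by omega : 1 < e)
  have hq' : (q : ℝ) ≠ 0 := by positivity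
  have hD' := sq_mul_selfIntersection_div (e := e) (p := p) hq'
  have hs : 0 < selfIntersection e (p / q) := pos_of_mul_pos_right (hD' ▸ hD) (sq_nonneg _)
  have hPell' : (l : ℝ) ^ 2 - ((k : ℝ) * q) ^ 2 * selfIntersection e (p / q) = 1 := by
    linear_combination hPell - (k : ℝ) ^ 2 * hD'
  refine (setOf_lt_sqrt_selfIntersection he'.le (by positivity) (by positivity) hs hPell').trans ?_
  ext t
  rw [mem_ofPred, mul_sq_sub_lt_selfIntersection_iff he' (by positivity) hPell']
  simp only [mul_pow, ← mul_assoc]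

/-- Interval-borders lemma, Case 2 (`End(X) = ℤ[(1+√e)/2]`): the submaximality interval of
the Pell bound `π_λ(t) = kq(2 + λ + t + ((1-e)/2)λt)/l`, `λ = p/q`, is the explicit open
interval `((2 + 2ek²q²λ - 2l√e)/((e-1) + 2ek²q²), (2 + 2ek²q²λ + 2l√e)/((e-1) + 2ek²q²))`. -/
theorem pell_bound_interval_case2 (e p q l k : ℤ) (he : 5 ≤ e) (hmod : e % 4 = 1)
    (hq : 0 < q) (hl : 0 < l) (hk : 0 < k)
    (hD : 0 < 2 * (q : ℝ) ^ 2 + 2 * (p : ℝ) * (q : ℝ) + ((1 - (e : ℝ)) / 2) * (p : ℝ) ^ 2)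
    (hPell : (l : ℝ) ^ 2 -
        (2 * (q : ℝ) ^ 2 + 2 * (p : ℝ) * (q : ℝ) + ((1 - (e : ℝ)) / 2) * (p : ℝ) ^ 2) *
          (k : ℝ) ^ 2 = 1) :
    {t : ℝ | 0 < 2 + 2 * t + ((1 - (e : ℝ)) / 2) * t ^ 2 ∧
        ((k : ℝ) * (q : ℝ) *
            (2 + (p : ℝ) / (q : ℝ) + t + ((1 - (e : ℝ)) / 2) * ((p : ℝ) / (q : ℝ)) * t)) /
            (l : ℝ) <
          Real.sqrt (2 + 2 * t + ((1 - (e : ℝ)) / 2) * t ^ 2)} =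
      Set.Ioo
        ((2 + 2 * (e : ℝ) * (k : ℝ) ^ 2 * (q : ℝ) ^ 2 * ((p : ℝ) / (q : ℝ)) -
            2 * (l : ℝ) * Real.sqrt (e : ℝ)) /
          (((e : ℝ) - 1) + 2 * (e : ℝ) * (k : ℝ) ^ 2 * (q : ℝ) ^ 2))
        ((2 + 2 * (e : ℝ) * (k : ℝ) ^ 2 * (q : ℝ) ^ 2 * ((p : ℝ) / (q : ℝ)) +
            2 * (l : ℝ) * Real.sqrt (e : ℝ)) /
          (((e : ℝ) - 1) + 2 * (e : ℝ) * (k : ℝ) ^ 2 * (q : ℝ) ^ 2)) :=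
  pell_bound_interval_case2_general e p q l k he hq hl hk hD hPell
end

section
/- Let e ≥ 1 be an integer, p an integer, and q, l, k positive integers such that D := 2q² − 2e·p² > 0 and l² − D·k² = 1. Then (2l·√e)/(e·(2k²q² + 1)) < √2/(q·√e). -/
/-!
Since `e = √e²`, the claim reads `2lq < √2 (2k²q² + 1)`, which follows from
`2l²q² < (2k²q² + 1)²`. The Pell equation gives `l² = 1 + Dk² ≤ 1 + 2q²k²`, so
`2l²q² ≤ 4k²q⁴ + 2q²`, and this is `< 4k⁴q⁴ + 4k²q² + 1` as soon as `k ≠ 0`.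
-/

section OrderedRing

variable {R : Type*} [CommRing R] [LinearOrder R] [IsStrictOrderedRing R]

lemma sq_le_of_pell {l k D M : R} (hPell : l ^ 2 - D * k ^ 2 = 1) (hDM : D ≤ M) :
    l ^ 2 ≤ M * k ^ 2 + 1 := by
  nlinarith [mul_le_mul_of_nonneg_right hDM (sq_nonneg k)]

lemma two_mul_sq_mul_sq_lt_sq {l k q : R} (hl : l ^ 2 ≤ 2 * q ^ 2 * k ^ 2 + 1)
    (hk : 1 ≤ k ^ 2) : 2 * l ^ 2 * q ^ 2 < (2 * k ^ 2 * q ^ 2 + 1) ^ 2 := by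
  nlinarith [mul_le_mul_of_nonneg_right hl (sq_nonneg q),
    mul_le_mul_of_nonneg_left hk (sq_nonneg (q ^ 2 * k)), mul_le_mul_of_nonneg_left hk (sq_nonneg q)]

end OrderedRing

lemma two_mul_mul_sqrt_div_lt_sqrt_two_div {e q a X : ℝ} (he : 0 < e) (hq : 0 < q) (hX : 0 < X)
    (h : 2 * a ^ 2 * q ^ 2 < X ^ 2) :
    2 * a * √e / (e * X) < √2 / (q * √e) := by
  have hse : 0 < √e := Real.sqrt_pos.mpr he
  have hlt : 2 * a * q / X < √2 := by
    refine Real.lt_sqrt_of_sq_lt ?_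
    rw [div_pow, div_lt_iff₀ (by positivity)]
    linarith
  calc 2 * a * √e / (e * X) = 2 * a * q / X / (q * √e) := by
        field_simp
        rw [Real.sq_sqrt he.le]
    _ < √2 / (q * √e) := by gcongr

theorem pell_interval_length_case1_general (e p q l k : ℤ) (he : 1 ≤ e)
    (hq : 0 < q) (hk : 0 < k)
    (hPell : l ^ 2 - (2 * q ^ 2 - 2 * e * p ^ 2) * k ^ 2 = 1) :
    (2 * (l : ℝ) * Real.sqrt (e : ℝ)) / ((e : ℝ) * (2 * (k : ℝ) ^ 2 * (q : ℝ) ^ 2 + 1)) <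
      Real.sqrt 2 / ((q : ℝ) * Real.sqrt (e : ℝ)) := by
  have hl : l ^ 2 ≤ 2 * q ^ 2 * k ^ 2 + 1 :=
    sq_le_of_pell hPell (by nlinarith [sq_nonneg p])
  have hkey : 2 * l ^ 2 * q ^ 2 < (2 * k ^ 2 * q ^ 2 + 1) ^ 2 :=
    two_mul_sq_mul_sq_lt_sq hl (one_le_pow₀ hk)
  refine two_mul_mul_sqrt_div_lt_sqrt_two_div (by exact_mod_cast zero_lt_one.trans_le he)
    (by exact_mod_cast hq) (by positivity) ?_
  exact_mod_cast hkey

/-- Interval-length lemma, Case 1 (`End(X) = ℤ[√e]`): the length of the submaximality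
interval of a Pell bound is bounded by `√2/(q√e)`. -/
theorem pell_interval_length_case1 (e p q l k : ℤ) (he : 1 ≤ e)
    (hq : 0 < q) (hl : 0 < l) (hk : 0 < k)
    (hD : 0 < 2 * q ^ 2 - 2 * e * p ^ 2)
    (hPell : l ^ 2 - (2 * q ^ 2 - 2 * e * p ^ 2) * k ^ 2 = 1) :
    (2 * (l : ℝ) * Real.sqrt (e : ℝ)) / ((e : ℝ) * (2 * (k : ℝ) ^ 2 * (q : ℝ) ^ 2 + 1)) <
      Real.sqrt 2 / ((q : ℝ) * Real.sqrt (e : ℝ)) :=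
  pell_interval_length_case1_general e p q l k he hq hk hPell
end

section
/- Let e ≥ 5 be a non-square integer with e ≡ 1 (mod 4), let p be an integer and q a positive integer with gcd(p,q) = 1, and let l, k be positive integers such that D := 2q² + 2pq + ((1−e)/2)·p² > 0 and l² − D·k² = 1. Then (4l·√e)/((e−1) + 2e·k²q²) < √11/(q·√e). -/
/-!
Write `B = (e - 1) + 2ek²q²`. Completing the square gives `(e - 1)·D ≤ 2eq²`
(i.e. `L_λ² ≤ 2 + 2/(e - 1)`), so the Pell equation `l² = 1 + Dk²` yields `(e - 1)·l² ≤ B`.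
After clearing denominators the claim is `(4lqe)² < 11·B²`, and by the previous bound it
suffices that `16e²q² < 11(e - 1)·B`; this holds as soon as `k² ≥ 1` and `3e ≥ 11`.
-/

/-- The quantity `D = q²·L_λ²` for `λ = p/q`. -/
noncomputable def pellDisc (e p q : ℝ) : ℝ :=
  2 * q ^ 2 + 2 * p * q + ((1 - e) / 2) * p ^ 2

lemma pellDisc_mul_sub_one_le (e p q : ℝ) : pellDisc e p q * (e - 1) ≤ 2 * e * q ^ 2 := by
  have hsq : 2 * e * q ^ 2 - pellDisc e p q * (e - 1) = (2 * q - (e - 1) * p) ^ 2 / 2 := by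
    unfold pellDisc; ring
  linarith [sq_nonneg (2 * q - (e - 1) * p)]

lemma sq_mul_sub_one_le_of_pell {e p q l k : ℝ} (hPell : l ^ 2 - pellDisc e p q * k ^ 2 = 1) :
    l ^ 2 * (e - 1) ≤ (e - 1) + 2 * e * k ^ 2 * q ^ 2 := by
  have hl : l ^ 2 = 1 + pellDisc e p q * k ^ 2 := by linarith
  rw [hl]
  nlinarith [mul_le_mul_of_nonneg_right (pellDisc_mul_sub_one_le e p q) (sq_nonneg k)]

lemma sixteen_mul_sq_lt {e q k : ℝ} (he : 11 ≤ 3 * e) (hk : 1 ≤ k ^ 2) :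
    16 * e ^ 2 * q ^ 2 < 11 * (e - 1) * ((e - 1) + 2 * e * k ^ 2 * q ^ 2) := by
  have hkq : q ^ 2 ≤ k ^ 2 * q ^ 2 := le_mul_of_one_le_left (sq_nonneg q) hk
  have hcoef : 0 ≤ 22 * e * (e - 1) - 16 * e ^ 2 := by nlinarith
  nlinarith [mul_le_mul_of_nonneg_left hkq (by nlinarith : (0 : ℝ) ≤ 22 * e * (e - 1)),
    mul_nonneg hcoef (sq_nonneg q)]

lemma four_mul_lt_sqrt_eleven_mul_of_pell {e p q l k : ℝ} (he : 11 ≤ 3 * e) (hk : 1 ≤ k ^ 2)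
    (hPell : l ^ 2 - pellDisc e p q * k ^ 2 = 1) :
    4 * l * q * e < √11 * ((e - 1) + 2 * e * k ^ 2 * q ^ 2) := by
  set B := (e - 1) + 2 * e * k ^ 2 * q ^ 2
  have he1 : 0 < e - 1 := by linarith
  have he0 : 0 ≤ e := by linarith
  have hB : 0 < B := add_pos_of_pos_of_nonneg he1 (by positivity)
  have hsq : (4 * l * q * e) ^ 2 < 11 * B ^ 2 := by
    refine lt_of_mul_lt_mul_right ?_ he1.le
    calc (4 * l * q * e) ^ 2 * (e - 1) = 16 * e ^ 2 * q ^ 2 * (l ^ 2 * (e - 1)) := by ring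
      _ ≤ 16 * e ^ 2 * q ^ 2 * B :=
        mul_le_mul_of_nonneg_left (sq_mul_sub_one_le_of_pell hPell) (by positivity)
      _ < 11 * (e - 1) * B * B := mul_lt_mul_of_pos_right (sixteen_mul_sq_lt he hk) hB
      _ = 11 * B ^ 2 * (e - 1) := by ring
  calc 4 * l * q * e < √(11 * B ^ 2) := Real.lt_sqrt_of_sq_lt hsq
    _ = √11 * B := by rw [Real.sqrt_mul (by norm_num), Real.sqrt_sq hB.le]

theorem pell_interval_length_case2_general (e p q l k : ℤ) (he : 5 ≤ e)
    (hq : 0 < q) (hk : 0 < k)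
    (hPell : (l : ℝ) ^ 2 -
        (2 * (q : ℝ) ^ 2 + 2 * (p : ℝ) * (q : ℝ) + ((1 - (e : ℝ)) / 2) * (p : ℝ) ^ 2) *
          (k : ℝ) ^ 2 = 1) :
    (4 * (l : ℝ) * Real.sqrt (e : ℝ)) /
        (((e : ℝ) - 1) + 2 * (e : ℝ) * (k : ℝ) ^ 2 * (q : ℝ) ^ 2) <
      Real.sqrt 11 / ((q : ℝ) * Real.sqrt (e : ℝ)) := by
  have heR : (5 : ℝ) ≤ e := by exact_mod_cast he
  have hqR : (0 : ℝ) < q := by exact_mod_cast hq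
  have hkR : (1 : ℝ) ≤ (k : ℝ) ^ 2 := one_le_pow₀ (by exact_mod_cast hk)
  have hse : √(e : ℝ) * √(e : ℝ) = e := Real.mul_self_sqrt (by linarith)
  have hB : (0 : ℝ) < (e - 1) + 2 * e * k ^ 2 * q ^ 2 :=
    add_pos_of_pos_of_nonneg (by linarith) (by positivity)
  rw [div_lt_div_iff₀ hB (by positivity)]
  calc 4 * (l : ℝ) * √(e : ℝ) * (q * √(e : ℝ)) = 4 * l * q * (√(e : ℝ) * √(e : ℝ)) := by ring
    _ = 4 * l * q * e := by rw [hse]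
    _ < √11 * ((e - 1) + 2 * e * k ^ 2 * q ^ 2) :=
      four_mul_lt_sqrt_eleven_mul_of_pell (p := p) (by linarith) hkR hPell

/-- Interval-length lemma, Case 2 (`End(X) = ℤ[(1+√e)/2]`): the length of the
submaximality interval of a Pell bound is bounded by `√11/(q√e)`. -/
theorem pell_interval_length_case2 (e p q l k : ℤ) (he : 5 ≤ e) (hmod : e % 4 = 1)
    (hns : ¬ IsSquare e) (hq : 0 < q) (hcop : Int.gcd p q = 1) (hl : 0 < l) (hk : 0 < k)
    (hD : 0 < 2 * (q : ℝ) ^ 2 + 2 * (p : ℝ) * (q : ℝ) + ((1 - (e : ℝ)) / 2) * (p : ℝ) ^ 2)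
    (hPell : (l : ℝ) ^ 2 -
        (2 * (q : ℝ) ^ 2 + 2 * (p : ℝ) * (q : ℝ) + ((1 - (e : ℝ)) / 2) * (p : ℝ) ^ 2) *
          (k : ℝ) ^ 2 = 1) :
    (4 * (l : ℝ) * Real.sqrt (e : ℝ)) /
        (((e : ℝ) - 1) + 2 * (e : ℝ) * (k : ℝ) ^ 2 * (q : ℝ) ^ 2) <
      Real.sqrt 11 / ((q : ℝ) * Real.sqrt (e : ℝ)) :=
  pell_interval_length_case2_general e p q l k he hq hk hPell
end

section
/- Let e be a positive non-square integer and let G be the 2×2 integer matrix [[2,0],[0,−2e]]. Suppose M = [[α,β],[γ,δ]] is a 2×2 integer matrix with Mᵀ·G·M = G and α > 0. Then α² − e·γ² = 1, and either (β, δ) = (e·γ, α) or (β, δ) = (−e·γ, −α). -/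
open Matrix

section DiagonalForm

variable {R : Type*} [CommRing R]

theorem transpose_mul_diagonal_mul_fin_two (a b α β γ δ : R) :
    (!![α, β; γ, δ] : Matrix (Fin 2) (Fin 2) R)ᵀ * !![a, 0; 0, b] * !![α, β; γ, δ] =
      !![a * α ^ 2 + b * γ ^ 2, a * α * β + b * γ * δ;
        a * α * β + b * γ * δ, a * β ^ 2 + b * δ ^ 2] := by
  ext i j
  fin_cases i <;> fin_cases j <;> simp [mul_apply, Fin.sum_univ_two] <;> ring

theorem transpose_mul_diagonal_mul_fin_two_eq_self_iff (a b α β γ δ : R) :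
    (!![α, β; γ, δ] : Matrix (Fin 2) (Fin 2) R)ᵀ * !![a, 0; 0, b] * !![α, β; γ, δ] =
        !![a, 0; 0, b] ↔
      a * α ^ 2 + b * γ ^ 2 = a ∧ a * α * β + b * γ * δ = 0 ∧
        a * β ^ 2 + b * δ ^ 2 = b := by
  rw [transpose_mul_diagonal_mul_fin_two, ← Matrix.ext_iff]
  simp [Fin.forall_fin_two, and_assoc]

variable [NoZeroDivisors R] {a b α β γ δ : R}

/-- The squared relation `(aαβ)² = (bγδ)²` together with the two norm equations forces
`ab(δ² - α²) = 0`. -/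
theorem sq_eq_sq_of_diagonal_isometry (ha : a ≠ 0) (hb : b ≠ 0)
    (h₁ : a * α ^ 2 + b * γ ^ 2 = a) (h₂ : a * α * β + b * γ * δ = 0)
    (h₃ : a * β ^ 2 + b * δ ^ 2 = b) : δ ^ 2 = α ^ 2 := by
  have h : a * b * (δ ^ 2 - α ^ 2) = 0 := by
    linear_combination
      (a * β ^ 2 - b) * h₁ - (a * α * β - b * γ * δ) * h₂ + (a - b * γ ^ 2) * h₃
  simpa [ha, hb, sub_eq_zero] using h

theorem diagonal_isometry_second_column (ha : a ≠ 0) (hb : b ≠ 0) (hα : α ≠ 0)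
    (h₁ : a * α ^ 2 + b * γ ^ 2 = a) (h₂ : a * α * β + b * γ * δ = 0)
    (h₃ : a * β ^ 2 + b * δ ^ 2 = b) :
    (δ = α ∧ a * β = -(b * γ)) ∨ (δ = -α ∧ a * β = b * γ) := by
  rcases sq_eq_sq_iff_eq_or_eq_neg.mp (sq_eq_sq_of_diagonal_isometry ha hb h₁ h₂ h₃) with
    hδ | hδ
  · refine Or.inl ⟨hδ, ?_⟩
    have h : α * (a * β + b * γ) = 0 := by linear_combination h₂ - b * γ * hδ
    exact eq_neg_of_add_eq_zero_left ((mul_eq_zero.mp h).resolve_left hα)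
  · refine Or.inr ⟨hδ, ?_⟩
    have h : α * (a * β - b * γ) = 0 := by linear_combination h₂ - b * γ * hδ
    exact sub_eq_zero.mp ((mul_eq_zero.mp h).resolve_left hα)

end DiagonalForm

theorem isometry_classification_case1_general (e : ℤ) (he : 0 < e)
    (α β γ δ : ℤ)
    (hiso : Matrix.transpose (!![α, β; γ, δ] : Matrix (Fin 2) (Fin 2) ℤ) *
        !![2, 0; 0, -2 * e] * !![α, β; γ, δ] = !![2, 0; 0, -2 * e])
    (hα : 0 < α) :
    α ^ 2 - e * γ ^ 2 = 1 ∧ ((β = e * γ ∧ δ = α) ∨ (β = -(e * γ) ∧ δ = -α)) := by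
  obtain ⟨h₁, h₂, h₃⟩ :=
    (transpose_mul_diagonal_mul_fin_two_eq_self_iff _ _ _ _ _ _).mp hiso
  refine ⟨by linarith, ?_⟩
  have hb : -2 * e ≠ 0 := by linarith
  rcases diagonal_isometry_second_column two_ne_zero hb hα.ne' h₁ h₂ h₃ with
    ⟨hδ, hβ⟩ | ⟨hδ, hβ⟩
  · exact Or.inl ⟨by linarith, hδ⟩
  · exact Or.inr ⟨by linarith, hδ⟩

/-- Classification of isometries preserving the ample cone, Case 1 (`End(X) = ℤ[√e]`):
if `MᵀGM = G` for `G = diag(2, -2e)` and the top-left entry `α` of `M` is positive, then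
`α² - eγ² = 1` and `(β,δ) = (eγ, α)` or `(β,δ) = (-eγ, -α)`. -/
theorem isometry_classification_case1 (e : ℤ) (he : 0 < e) (hns : ¬ IsSquare e)
    (α β γ δ : ℤ)
    (hiso : Matrix.transpose (!![α, β; γ, δ] : Matrix (Fin 2) (Fin 2) ℤ) *
        !![2, 0; 0, -2 * e] * !![α, β; γ, δ] = !![2, 0; 0, -2 * e])
    (hα : 0 < α) :
    α ^ 2 - e * γ ^ 2 = 1 ∧ ((β = e * γ ∧ δ = α) ∨ (β = -(e * γ) ∧ δ = -α)) :=
  isometry_classification_case1_general e he α β γ δ hiso hα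
end

section
/- Let e ≥ 5 be a non-square integer with e ≡ 1 (mod 4), set f = (e−1)/4, and let G be the 2×2 integer matrix [[4,2],[2,1−e]]. Suppose M = [[α,β],[γ,δ]] is a 2×2 integer matrix with Mᵀ·G·M = G and α > 0. Then α² + αγ − f·γ² = 1, and either (β, δ) = (f·γ, α + γ) or (β, δ) = (α − f·γ, −α). -/
/-!
Taking determinants in `MᵀGM = G` gives `det M ^ 2 = 1`, since `det G = -4e ≠ 0`. Multiplying
`MᵀGM = G` on the left by `adj Mᵀ` turns it into the relation `det M • (G M) = adj Mᵀ * G`, which is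
*linear* in the entries of `M`; for `det M = 1` and `det M = -1` it pins down `β` and `δ` in terms
of `α` and `γ`. The norm equation is the top-left entry of `MᵀGM = G`.
-/

open Matrix

namespace Matrix

theorem transpose_fin_two_of {R : Type*} (a b c d : R) : !![a, b; c, d]ᵀ = !![a, c; b, d] := by
  ext i j
  fin_cases i <;> fin_cases j <;> rfl

variable {n R : Type*} [Fintype n] [DecidableEq n] [CommRing R]

theorem det_sq_eq_one_of_transpose_mul_mul_eq [IsDomain R] {M G : Matrix n n R}
    (hM : Mᵀ * G * M = G) (hG : G.det ≠ 0) : M.det ^ 2 = 1 := by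
  have h := congrArg det hM
  rw [det_mul, det_mul, det_transpose] at h
  exact mul_left_cancel₀ hG (by linear_combination h)

theorem det_smul_mul_eq_adjugate_transpose_mul_of_transpose_mul_mul_eq {M G : Matrix n n R}
    (hM : Mᵀ * G * M = G) : M.det • (G * M) = adjugate Mᵀ * G :=
  calc M.det • (G * M) = (adjugate Mᵀ * Mᵀ) * (G * M) := by
        rw [adjugate_mul, det_transpose, smul_mul, Matrix.one_mul]
    _ = adjugate Mᵀ * (Mᵀ * G * M) := by simp only [Matrix.mul_assoc]
    _ = adjugate Mᵀ * G := by rw [hM]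

end Matrix

theorem isometry_classification_case2_general (e f : ℤ) (he : 5 ≤ e) (hf : e = 4 * f + 1)
    (α β γ δ : ℤ)
    (hiso : Matrix.transpose (!![α, β; γ, δ] : Matrix (Fin 2) (Fin 2) ℤ) *
        !![4, 2; 2, 1 - e] * !![α, β; γ, δ] = !![4, 2; 2, 1 - e]) :
    α ^ 2 + α * γ - f * γ ^ 2 = 1 ∧
      ((β = f * γ ∧ δ = α + γ) ∨ (β = α - f * γ ∧ δ = -α)) := by
  subst hf
  have hG : (!![4, 2; 2, 1 - (4 * f + 1)] : Matrix (Fin 2) (Fin 2) ℤ).det ≠ 0 := by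
    rw [det_fin_two_of]; omega
  have hdet := sq_eq_one_iff.1 (det_sq_eq_one_of_transpose_mul_mul_eq hiso hG)
  have hlin := det_smul_mul_eq_adjugate_transpose_mul_of_transpose_mul_mul_eq hiso
  rw [transpose_fin_two_of, mul_fin_two, mul_fin_two] at hiso
  rw [transpose_fin_two_of, adjugate_fin_two_of, mul_fin_two, mul_fin_two, smul_of] at hlin
  simp only [smul_cons, smul_eq_mul, smul_empty, EmbeddingLike.apply_eq_iff_eq, vecCons_inj,
    and_true] at hiso hlin
  obtain ⟨⟨hnorm, -⟩, -⟩ := hiso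
  obtain ⟨⟨hδ, -⟩, hβ, -⟩ := hlin
  refine ⟨by linarith, ?_⟩
  rw [det_fin_two_of] at hdet hδ hβ
  rcases hdet with hdet | hdet <;> rw [hdet] at hδ hβ
  · left; constructor <;> linarith
  · right; constructor <;> linarith

/-- Classification of isometries preserving the ample cone, Case 2
(`End(X) = ℤ[(1+√e)/2]`, `e = 4f + 1`): if `MᵀGM = G` for `G = [[4,2],[2,1-e]]` (twice the
Gram matrix) and the top-left entry `α` of `M` is positive, then `α² + αγ - fγ² = 1` and
`(β,δ) = (fγ, α+γ)` or `(β,δ) = (α - fγ, -α)`. -/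
theorem isometry_classification_case2 (e f : ℤ) (he : 5 ≤ e) (hf : e = 4 * f + 1)
    (hns : ¬ IsSquare e) (α β γ δ : ℤ)
    (hiso : Matrix.transpose (!![α, β; γ, δ] : Matrix (Fin 2) (Fin 2) ℤ) *
        !![4, 2; 2, 1 - e] * !![α, β; γ, δ] = !![4, 2; 2, 1 - e])
    (hα : 0 < α) :
    α ^ 2 + α * γ - f * γ ^ 2 = 1 ∧
      ((β = f * γ ∧ δ = α + γ) ∨ (β = α - f * γ ∧ δ = -α)) :=
  isometry_classification_case2_general e f he hf α β γ δ hiso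
end

section
/- Let e be a positive non-square integer with e ≡ 1 (mod 4). Then the following are equivalent: (i) no prime factor p of e satisfies p ≡ 5 (mod 8) or p ≡ 7 (mod 8); (ii) there exist natural numbers A and B with gcd(A, B) = 1 and e = A² + 8B². -/
/-!
If `p ∣ A² + 8B² = A² + 2(2B)²` with `A, B` coprime and `p` odd, then `p ∤ 2B`, so `-2` is a
square modulo `p`, i.e. `p ≡ 1, 3 (mod 8)`.

Conversely, if every prime factor of `e` is `≡ 1, 3 (mod 8)`, then `-2` is a square modulo each
of them, hence (Hensel, CRT) modulo `e`. Euler's descent shows that every `n ∣ c² + 2` is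
properly represented by `x² + 2y²`: after reducing `c` we have `c² + 2 = n m` with `m < n`, the
prime factors of `m` are represented by induction, and dividing a proper representation by a
represented prime keeps it proper. Finally `e ≡ 1 (mod 4)` forces `y` to be even.
-/

theorem ZMod.isSquare_intCast_iff {n : ℕ} {a : ℤ} :
    IsSquare (a : ZMod n) ↔ ∃ c : ℤ, (n : ℤ) ∣ c ^ 2 - a := by
  simp_rw [← ZMod.intCast_zmod_eq_zero_iff_dvd]
  constructor
  · rintro ⟨r, hr⟩
    refine ⟨r.cast, ?_⟩
    push_cast
    rw [hr]
    ring
  · rintro ⟨c, hc⟩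
    refine ⟨c, ?_⟩
    push_cast at hc
    linear_combination -hc

theorem ZMod.isSquare_intCast_mul {m n : ℕ} {a : ℤ} (hmn : m.Coprime n)
    (hm : IsSquare (a : ZMod m)) (hn : IsSquare (a : ZMod n)) : IsSquare (a : ZMod (m * n)) := by
  obtain ⟨x, hx⟩ := hm
  obtain ⟨y, hy⟩ := hn
  have : IsSquare (a : ZMod m × ZMod n) := ⟨(x, y), Prod.ext hx hy⟩
  simpa only [map_intCast] using this.map (ZMod.chineseRemainder hmn).symm

theorem Int.exists_sq_sub_dvd_mul {a x d M : ℤ} (hdM : d ∣ M) (hM : M ∣ x ^ 2 - a)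
    (hx : IsCoprime (2 * x) d) : ∃ y : ℤ, d * M ∣ y ^ 2 - a := by
  obtain ⟨w, hw⟩ := hM
  obtain ⟨u, v, huv⟩ := hx
  refine ⟨x - w * u * M, ?_⟩
  have hy : (x - w * u * M) ^ 2 - a = d * M * (w * v) + M * M * (w * u) ^ 2 := by
    linear_combination hw - M * w * huv
  rw [hy]
  exact dvd_add (dvd_mul_right _ _) ((mul_dvd_mul_right hdM M).mul_right _)

theorem ZMod.isSquare_intCast_prime_pow {p : ℕ} (hp : p.Prime) (hp2 : p ≠ 2) {a : ℤ}
    (hpa : ¬ (p : ℤ) ∣ a) (h : IsSquare (a : ZMod p)) (k : ℕ) : IsSquare (a : ZMod (p ^ k)) := by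
  rw [ZMod.isSquare_intCast_iff] at h ⊢
  obtain ⟨c, hc⟩ := h
  have hpZ : Prime (p : ℤ) := Nat.prime_iff_prime_int.mp hp
  have hp2Z : IsCoprime (2 : ℤ) p := (hpZ.coprime_iff_not_dvd.mpr <| by
    exact_mod_cast (Nat.prime_dvd_prime_iff_eq hp Nat.prime_two).not.mpr hp2).symm
  suffices ∀ k : ℕ, ∃ x : ℤ, (p : ℤ) ^ (k + 1) ∣ x ^ 2 - a by
    obtain ⟨x, hx⟩ := this k
    exact ⟨x, by push_cast; exact (pow_dvd_pow _ k.le_succ).trans hx⟩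
  intro k
  induction k with
  | zero => exact ⟨c, by simpa using hc⟩
  | succ k ih =>
    obtain ⟨x, hx⟩ := ih
    have hpx : ¬ (p : ℤ) ∣ x := fun hpx => hpa <| by
      simpa using (dvd_pow hpx two_ne_zero).sub ((dvd_pow_self _ k.succ_ne_zero).trans hx)
    have hx2 : IsCoprime (2 * x) p := hp2Z.mul_left (hpZ.coprime_iff_not_dvd.mpr hpx).symm
    simpa only [pow_succ'] using Int.exists_sq_sub_dvd_mul (dvd_pow_self _ k.succ_ne_zero) hx hx2

theorem ZMod.isSquare_neg_two_of_forall_prime_dvd {n : ℕ}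
    (h : ∀ p : ℕ, p.Prime → p ∣ n → p % 8 = 1 ∨ p % 8 = 3) : IsSquare (-2 : ZMod n) := by
  suffices IsSquare ((-2 : ℤ) : ZMod n) by simpa using this
  induction n using Nat.recOnPosPrimePosCoprime with
  | prime_pow p k hp hk =>
    have hp8 := h p hp (dvd_pow_self p hk.ne')
    have hp2 : p ≠ 2 := by rintro rfl; omega
    have := Fact.mk hp
    refine ZMod.isSquare_intCast_prime_pow hp hp2 ?_ ?_ k
    · rw [Int.dvd_neg]
      exact_mod_cast (Nat.prime_dvd_prime_iff_eq hp Nat.prime_two).not.mpr hp2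
    · simpa using (ZMod.exists_sq_eq_neg_two_iff hp2).mpr hp8
  | zero => exact absurd (h 2 Nat.prime_two (dvd_zero 2)) (by norm_num)
  | one => exact ⟨0, Subsingleton.elim _ _⟩
  | coprime a b _ _ hab iha ihb =>
    exact ZMod.isSquare_intCast_mul hab (iha fun p hp hpa => h p hp (hpa.mul_right b))
      (ihb fun p hp hpb => h p hp (hpb.mul_left a))

theorem ZMod.isSquare_neg_two_of_dvd_sq_add_two_mul_sq {p : ℕ} [Fact p.Prime] {x y : ℤ}
    (h : (p : ℤ) ∣ x ^ 2 + 2 * y ^ 2) (hy : ¬ (p : ℤ) ∣ y) : IsSquare (-2 : ZMod p) := by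
  rw [← ZMod.intCast_zmod_eq_zero_iff_dvd] at h hy
  push_cast at h
  exact ⟨x / y, by field_simp; linear_combination -h⟩

theorem Nat.Prime.mod_eight_of_dvd_sq_add_eight_mul_sq {p A B : ℕ} (hp : p.Prime) (hp2 : p ≠ 2)
    (hAB : A.gcd B = 1) (h : p ∣ A ^ 2 + 8 * B ^ 2) : p % 8 = 1 ∨ p % 8 = 3 := by
  have := Fact.mk hp
  have hpB : ¬ p ∣ 2 * B := fun hpB => hp.not_dvd_one <| hAB ▸ by
    have hpB : p ∣ B := ((hp.dvd_mul).mp hpB).resolve_left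
      ((Nat.prime_dvd_prime_iff_eq hp Nat.prime_two).not.mpr hp2)
    have hpA : p ∣ A ^ 2 := (Nat.dvd_add_left ((hpB.pow two_ne_zero).mul_left 8)).mp h
    exact Nat.dvd_gcd (hp.dvd_of_dvd_pow hpA) hpB
  refine (ZMod.exists_sq_eq_neg_two_iff hp2).mp
    (ZMod.isSquare_neg_two_of_dvd_sq_add_two_mul_sq (x := A) (y := (2 * B : ℕ)) ?_ ?_)
  · have h' : p ∣ A ^ 2 + 2 * (2 * B) ^ 2 := by convert h using 2; ring
    exact_mod_cast h'
  · exact_mod_cast hpB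

def IsPrimitiveSqAddTwoSq (n : ℤ) : Prop :=
  ∃ a b : ℤ, IsCoprime a b ∧ n = a ^ 2 + 2 * b ^ 2

namespace IsPrimitiveSqAddTwoSq

theorem of_mul_of_dvd {n q a b u v : ℤ} (hq : Prime q) (hquv : q = u ^ 2 + 2 * v ^ 2)
    (hab : IsCoprime a b) (h : n * q = a ^ 2 + 2 * b ^ 2) (hdvd : q ∣ a * v - b * u) :
    IsPrimitiveSqAddTwoSq n := by
  obtain ⟨t, ht⟩ := hdvd
  -- `(au + 2bv)² + 2(av - bu)² = (a² + 2b²)(u² + 2v²) = n q²`, so `q ∣ au + 2bv` as well, and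
  -- dividing this identity by `q²` represents `n`.
  have hs : q ∣ a * u + 2 * b * v := by
    refine hq.dvd_of_dvd_pow (n := 2) ⟨n * q - 2 * q * t ^ 2, ?_⟩
    linear_combination -2 * (a * v - b * u + q * t) * ht - q * h - (a ^ 2 + 2 * b ^ 2) * hquv
  obtain ⟨s, hs⟩ := hs
  have hq0 : q ≠ 0 := hq.ne_zero
  refine ⟨s, t, ?_, ?_⟩
  · have ha : a = s * u + 2 * t * v :=
      mul_left_cancel₀ hq0 (by linear_combination u * hs + 2 * v * ht + a * hquv)
    have hb : b = s * v - t * u :=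
      mul_left_cancel₀ hq0 (by linear_combination v * hs - u * ht + b * hquv)
    obtain ⟨x, y, hxy⟩ := hab
    exact ⟨x * u + y * v, 2 * x * v - y * u, by linear_combination hxy - x * ha - y * hb⟩
  · apply mul_left_cancel₀ (pow_ne_zero 2 hq0)
    linear_combination (a * u + 2 * b * v + q * s) * hs + 2 * (a * v - b * u + q * t) * ht
      + q * h + (a ^ 2 + 2 * b ^ 2) * hquv

theorem of_mul_prime {n q u v : ℤ} (hq : Prime q) (hquv : q = u ^ 2 + 2 * v ^ 2)
    (h : IsPrimitiveSqAddTwoSq (n * q)) : IsPrimitiveSqAddTwoSq n := by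
  obtain ⟨a, b, hab, h⟩ := h
  have : q ∣ (a * v - b * u) * (a * v + b * u) :=
    ⟨v ^ 2 * n - b ^ 2, by linear_combination -v ^ 2 * h + b ^ 2 * hquv⟩
  -- Replacing `u` by `-u` swaps the two factors.
  rcases hq.dvd_or_dvd this with hdvd | hdvd
  · exact of_mul_of_dvd hq hquv hab h hdvd
  · exact of_mul_of_dvd hq (u := -u) (v := v) (by rw [hquv]; ring) hab h (by simpa using hdvd)

theorem of_mul {n : ℤ} {m : ℕ} (hm : m ≠ 0)
    (hprimes : ∀ q : ℕ, q.Prime → q ∣ m → ∃ u v : ℤ, (q : ℤ) = u ^ 2 + 2 * v ^ 2)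
    (h : IsPrimitiveSqAddTwoSq (n * m)) : IsPrimitiveSqAddTwoSq n := by
  induction m using induction_on_primes generalizing n with
  | zero => exact absurd rfl hm
  | one => simpa using h
  | prime_mul q m hq ih =>
    obtain ⟨u, v, huv⟩ := hprimes q hq (dvd_mul_right q m)
    refine ih (right_ne_zero_of_mul hm) (fun r hr hrm => hprimes r hr (hrm.mul_left q)) ?_
    refine of_mul_prime (Nat.prime_iff_prime_int.mp hq) huv ?_
    simpa only [Nat.cast_mul, mul_comm, mul_left_comm, mul_assoc] using h

end IsPrimitiveSqAddTwoSq

theorem isPrimitiveSqAddTwoSq_of_dvd_sq_add_two (n : ℕ) (c : ℤ) (hc : (n : ℤ) ∣ c ^ 2 + 2) :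
    IsPrimitiveSqAddTwoSq n := by
  induction n using Nat.strong_induction_on generalizing c with
  | _ n ih =>
  rcases lt_trichotomy n 1 with hn | rfl | hn
  · obtain rfl : n = 0 := by omega
    have := eq_zero_of_zero_dvd hc
    nlinarith
  · exact ⟨1, 0, isCoprime_one_left, by norm_num⟩
  -- With `|c'| ≤ n / 2` the cofactor `m` of `c'² + 2 = n m` is smaller than `n`.
  set c' := c.bmod n
  have hc' : (n : ℤ) ∣ c' ^ 2 + 2 :=
    ((Int.ModEq.add_right 2 (Int.ModEq.pow 2 (Int.bmod_emod (x := c) (m := n)))).dvd_iff).mpr hc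
  obtain ⟨d, hd⟩ := hc'
  have hd0 : 0 ≤ d := by nlinarith
  obtain ⟨m, rfl⟩ := Int.eq_ofNat_of_zero_le hd0
  have hc'_le : 2 * c' ≤ n := by have := Int.bmod_lt (x := c) (m := n) (by omega); omega
  have hc'_ge : -(n : ℤ) ≤ 2 * c' := by have := Int.le_bmod (x := c) (m := n) (by omega); omega
  have hmn : m < n := by
    have hn2 : (2 : ℤ) ≤ n := by omega
    have : (m : ℤ) < n := by nlinarith
    omega
  have hm0 : m ≠ 0 := by
    rintro rfl
    push_cast at hd
    nlinarith
  refine IsPrimitiveSqAddTwoSq.of_mul hm0 (fun q _ hqm => ?_)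
    ⟨c', 1, isCoprime_one_right, by rw [← hd]; ring⟩
  have hqc' : (q : ℤ) ∣ c' ^ 2 + 2 :=
    (Int.natCast_dvd_natCast.mpr hqm).trans (Dvd.intro_left _ hd.symm)
  obtain ⟨u, v, -, huv⟩ :=
    ih q ((Nat.le_of_dvd (Nat.pos_of_ne_zero hm0) hqm).trans_lt hmn) c' hqc'
  exact ⟨u, v, huv⟩

theorem IsPrimitiveSqAddTwoSq.exists_coprime_sq_add_eight_mul_sq {n : ℕ} (hn : n % 4 = 1)
    (h : IsPrimitiveSqAddTwoSq n) : ∃ A B : ℕ, A.gcd B = 1 ∧ n = A ^ 2 + 8 * B ^ 2 := by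
  obtain ⟨a, b, hab, hn'⟩ := h
  obtain ⟨B, rfl⟩ : Even b := by
    by_contra hb
    have hb2 := Int.sq_mod_four_eq_one_of_odd (Int.not_even_iff_odd.mp hb)
    rcases Int.even_or_odd a with ⟨j, rfl⟩ | ha
    · have : (j + j) ^ 2 = 4 * j ^ 2 := by ring
      omega
    · have := Int.sq_mod_four_eq_one_of_odd ha
      omega
  refine ⟨a.natAbs, B.natAbs, Int.isCoprime_iff_gcd_eq_one.mp ?_, ?_⟩
  · exact (show IsCoprime a (2 * B) by rwa [two_mul]).of_mul_right_right
  · have : (n : ℤ) = (a.natAbs : ℤ) ^ 2 + 8 * (B.natAbs : ℤ) ^ 2 := by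
      simp only [Int.natCast_natAbs, sq_abs]
      linear_combination hn'
    exact_mod_cast this

theorem no_bad_prime_iff_representation_general (e : ℕ) (hmod : e % 4 = 1) :
    (∀ p : ℕ, p.Prime → p ∣ e → ¬ (p % 8 = 5 ∨ p % 8 = 7)) ↔
      ∃ A B : ℕ, Nat.gcd A B = 1 ∧ e = A ^ 2 + 8 * B ^ 2 := by
  have hodd : ∀ p : ℕ, p.Prime → p ∣ e → p ≠ 2 := by
    rintro p - ⟨k, hk⟩ rfl
    omega
  constructor
  · intro h
    have h13 (p : ℕ) (hp : p.Prime) (hpe : p ∣ e) : p % 8 = 1 ∨ p % 8 = 3 := by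
      have := Nat.odd_iff.mp (hp.odd_of_ne_two (hodd p hp hpe))
      have := h p hp hpe
      omega
    have hsq : IsSquare ((-2 : ℤ) : ZMod e) := by
      simpa using ZMod.isSquare_neg_two_of_forall_prime_dvd h13
    obtain ⟨c, hc⟩ := ZMod.isSquare_intCast_iff.mp hsq
    refine IsPrimitiveSqAddTwoSq.exists_coprime_sq_add_eight_mul_sq hmod ?_
    exact isPrimitiveSqAddTwoSq_of_dvd_sq_add_two e c (by simpa using hc)
  · rintro ⟨A, B, hAB, rfl⟩ p hp hpe
    have := hp.mod_eight_of_dvd_sq_add_eight_mul_sq (hodd p hp hpe) hAB hpe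
    omega

/-- For a positive non-square integer `e ≡ 1 (mod 4)`: no prime factor of `e` is
`≡ 5` or `7 (mod 8)` if and only if `e = A² + 8B²` with coprime natural numbers `A, B`. -/
theorem no_bad_prime_iff_representation (e : ℕ) (he : 0 < e) (hns : ¬ IsSquare e)
    (hmod : e % 4 = 1) :
    (∀ p : ℕ, p.Prime → p ∣ e → ¬ (p % 8 = 5 ∨ p % 8 = 7)) ↔
      ∃ A B : ℕ, Nat.gcd A B = 1 ∧ e = A ^ 2 + 8 * B ^ 2 :=
  no_bad_prime_iff_representation_general e hmod
end

section
/- For every integer n ≥ 2, setting t = 2/(4n−1), both of the following strict inequalities hold: 2n·(2 + 1/(2n) + t − 2n·t)/(2n+1) < √(2 + 2t − 4n²·t²), and 2 + 1/(2n−1) + t − 4n²·t/(2n−1) < √(2 + 2t − 4n²·t²). -/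
/-! At `t = 2/(4n-1)` all three quantities become rational in `n` with the common denominator
`4n-1`: the bounds are `(8n² ± 4n - 1)/((4n-1)(2n ± 1))` and `L_t² = (16n² - 2)/(4n-1)²`.
Squaring, both submaximality claims reduce to
`(8n² ± 4n - 1)² + (8n² - 3) = (16n² - 2)(2n ± 1)²`, and `8n² - 3 > 0`. -/

lemma div_mul_lt_sqrt_div_sq {a b c d : ℝ} (hc : 0 < c) (hd : 0 < d) (h : a ^ 2 < b * d ^ 2) :
    a / (c * d) < √(b / c ^ 2) := by
  apply Real.lt_sqrt_of_sq_lt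
  rw [div_pow, mul_pow, div_lt_div_iff₀ (by positivity) (by positivity)]
  nlinarith [pow_pos hc 2]

section

variable {x : ℝ}

-- The right-hand sides are the `s = 1` and `s = -1` instances of `pell_quotient_lt_sqrt`.
lemma first_pell_bound_eq (hx : 1 ≤ x) :
    2 * x * (2 + 1 / (2 * x) + 2 / (4 * x - 1) - 2 * x * (2 / (4 * x - 1))) / (2 * x + 1) =
      (8 * x ^ 2 + 4 * 1 * x - 1) / ((4 * x - 1) * (2 * x + 1)) := by
  have : x * 4 - 1 ≠ 0 := by linarith
  have : 2 * x + 1 ≠ 0 := by linarith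
  field_simp
  ring

lemma second_pell_bound_eq (hx : 1 ≤ x) :
    2 + 1 / (2 * x - 1) + 2 / (4 * x - 1) - 4 * x ^ 2 * (2 / (4 * x - 1)) / (2 * x - 1) =
      (8 * x ^ 2 + 4 * (-1) * x - 1) / ((4 * x - 1) * (2 * x + -1)) := by
  have : x * 4 - 1 ≠ 0 := by linarith
  have : 2 * x - 1 ≠ 0 := by linarith
  have : 2 * x + -1 ≠ 0 := by linarith
  field_simp
  ring

lemma self_intersection_eq (hx : 1 ≤ x) :
    2 + 2 * (2 / (4 * x - 1)) - 4 * x ^ 2 * (2 / (4 * x - 1)) ^ 2 =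
      (16 * x ^ 2 - 2) / (4 * x - 1) ^ 2 := by
  have : 4 * x - 1 ≠ 0 := by linarith
  field_simp
  ring

lemma pell_quotient_lt_sqrt {s : ℝ} (hs : s ^ 2 = 1) (hx : 1 ≤ x) :
    (8 * x ^ 2 + 4 * s * x - 1) / ((4 * x - 1) * (2 * x + s)) <
      √((16 * x ^ 2 - 2) / (4 * x - 1) ^ 2) := by
  have hs_ge : -1 ≤ s := by nlinarith [sq_nonneg (s + 1)]
  have gap : (8 * x ^ 2 + 4 * s * x - 1) ^ 2 + (8 * x ^ 2 - 3) =
      (16 * x ^ 2 - 2) * (2 * x + s) ^ 2 := by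
    linear_combination 2 * hs
  refine div_mul_lt_sqrt_div_sq (by linarith) (by linarith) ?_
  nlinarith

end

/-- On a surface with `End(X) = ℤ[(1+√e)/2]`, `e = 1 + 8n²`, the two Pell bounds
`π_{1/(2n)}` and `π_{1/(2n-1)}` are both submaximal at `t = 2/(4n-1)`, i.e. strictly
below the general upper bound `√(L_t²) = √(2 + 2t - 4n²t²)`. -/
theorem two_pell_bounds_submaximal (n : ℕ) (hn : 2 ≤ n) (t : ℝ)
    (ht : t = 2 / (4 * (n : ℝ) - 1)) :
    2 * (n : ℝ) * (2 + 1 / (2 * (n : ℝ)) + t - 2 * (n : ℝ) * t) / (2 * (n : ℝ) + 1) <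
      Real.sqrt (2 + 2 * t - 4 * (n : ℝ) ^ 2 * t ^ 2) ∧
    2 + 1 / (2 * (n : ℝ) - 1) + t - 4 * (n : ℝ) ^ 2 * t / (2 * (n : ℝ) - 1) <
      Real.sqrt (2 + 2 * t - 4 * (n : ℝ) ^ 2 * t ^ 2) := by
  have hn₁ : (1 : ℝ) ≤ n := by exact_mod_cast (by omega : 1 ≤ n)
  subst ht
  rw [first_pell_bound_eq hn₁, second_pell_bound_eq hn₁, self_intersection_eq hn₁]
  exact ⟨pell_quotient_lt_sqrt (one_pow 2) hn₁, pell_quotient_lt_sqrt (by norm_num) hn₁⟩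
end

section
/- Let e be a positive non-square integer, let G be the 2×2 integer matrix [[2,0],[0,−2e]], and let (α₀, β₀) be the fundamental solution of x² − e·y² = 1 (i.e., α₀, β₀ are positive integers with α₀² − e·β₀² = 1, and every pair of positive integers (α, β) with α² − e·β² = 1 satisfies α₀ ≤ α). Set Φ₀ = [[α₀, e·β₀],[β₀, α₀]] and T = [[1,0],[0,−1]]. Then every 2×2 integer matrix M with Mᵀ·G·M = G and M₁₁ > 0 lies in the subgroup of GL₂(ℤ) generated by Φ₀ and T; more precisely, there exists k ∈ ℤ such that M = Φ₀ᵏ or M = Φ₀ᵏ·T (note Φ₀ has determinant 1, hence is invertible over ℤ). -/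
/-!
The first column `(a, c)` of an isometry `M` of `diag(2, -2e)` solves the Pell equation
`a² - e c² = 1`, and the remaining relations force `M = N` or `M = N·T`, where `N` is the matrix
of multiplication by `a + c√e` on `ℤ[√e]`. Pell solutions with `a > 0` are exactly the integral
powers of the fundamental one, and `x + y√e ↦ [[x, e y], [y, x]]` is multiplicative, so `N` is a
power of `Φ₀`.
-/

open Matrix Pell

/-- The matrix of multiplication by `x + y√d` on `ℤ[√d]` in the basis `(1, √d)`. -/
def Pell.Solution₁.matrixHom (d : ℤ) : Solution₁ d →* Matrix (Fin 2) (Fin 2) ℤ where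
  toFun a := !![a.x, d * a.y; a.y, a.x]
  map_one' := by simp [one_fin_two]
  map_mul' a b := by
    rw [mul_fin_two, Solution₁.x_mul, Solution₁.y_mul]
    ext i j
    fin_cases i <;> fin_cases j <;> simp <;> ring

theorem Pell.Solution₁.isFundamental_mk {d x y : ℤ} (hd : 0 < d) (hx : 0 < x) (hy : 0 < y)
    (h : x ^ 2 - d * y ^ 2 = 1)
    (hmin : ∀ α β : ℤ, 0 < α → 0 < β → α ^ 2 - d * β ^ 2 = 1 → x ≤ α) :
    IsFundamental (Solution₁.mk x y h) := by
  refine ⟨?_, hy, fun {b} hb ↦ ?_⟩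
  · show 1 < x
    nlinarith [mul_pos hd (mul_pos hy hy)]
  · show x ≤ b.x
    have hby : b.y ≠ 0 := Solution₁.y_ne_zero_of_one_lt_x hb
    exact hmin b.x |b.y| (by omega) (abs_pos.mpr hby) (by rw [sq_abs]; exact b.prop)

theorem Pell.IsFundamental.eq_zpow_of_x_pos {d : ℤ} {a₁ a : Solution₁ d}
    (h : IsFundamental a₁) (hax : 0 < a.x) : ∃ n : ℤ, a = a₁ ^ n := by
  obtain ⟨n, hn | hn⟩ := h.eq_zpow_or_neg_zpow a
  · exact ⟨n, hn⟩
  · have := Solution₁.x_zpow_pos h.x_pos n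
    rw [hn, Solution₁.x_neg] at hax
    omega

section Isometry

variable {d : ℤ} {M : Matrix (Fin 2) (Fin 2) ℤ}

theorem isometry_entries (h : Mᵀ * !![2, 0; 0, -2 * d] * M = !![2, 0; 0, -2 * d]) :
    M 0 0 ^ 2 - d * M 1 0 ^ 2 = 1 ∧ M 0 0 * M 0 1 = d * (M 1 0 * M 1 1) ∧
      M 0 1 ^ 2 - d * M 1 1 ^ 2 = -d := by
  have h00 := congrFun₂ h 0 0
  have h01 := congrFun₂ h 0 1
  have h11 := congrFun₂ h 1 1
  simp [mul_apply, Fin.sum_univ_two] at h00 h01 h11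
  refine ⟨?_, ?_, ?_⟩ <;> linarith

theorem isometry_eq_or_eq_mul_diag (hd : d ≠ 0) (ha : M 0 0 ≠ 0)
    (h : Mᵀ * !![2, 0; 0, -2 * d] * M = !![2, 0; 0, -2 * d]) :
    M = !![M 0 0, d * M 1 0; M 1 0, M 0 0] ∨
      M = !![M 0 0, d * M 1 0; M 1 0, M 0 0] * !![1, 0; 0, -1] := by
  obtain ⟨hcol, hdot, hrow⟩ := isometry_entries h
  have hsq : M 1 1 ^ 2 = M 0 0 ^ 2 := mul_left_cancel₀ hd <| by
    linear_combination -M 0 0 ^ 2 * hrow + (M 0 0 * M 0 1 + d * M 1 0 * M 1 1) * hdot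
      - d * M 1 1 ^ 2 * hcol
  rcases sq_eq_sq_iff_eq_or_eq_neg.mp hsq with hdiag | hdiag
  · have hb : M 0 1 = d * M 1 0 := mul_left_cancel₀ ha (by rw [hdot, hdiag]; ring)
    left
    rw [M.eta_fin_two]
    simp [hb, hdiag]
  · have hb : M 0 1 = -(d * M 1 0) := mul_left_cancel₀ ha (by rw [hdot, hdiag]; ring)
    right
    rw [M.eta_fin_two]
    simp [hb, hdiag]

end Isometry

theorem isometry_group_generated_general (e : ℤ) (he : 0 < e)
    (α₀ β₀ : ℤ) (hα₀ : 0 < α₀) (hβ₀ : 0 < β₀) (hPell : α₀ ^ 2 - e * β₀ ^ 2 = 1)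
    (hfund : ∀ α β : ℤ, 0 < α → 0 < β → α ^ 2 - e * β ^ 2 = 1 → α₀ ≤ α)
    (M : Matrix (Fin 2) (Fin 2) ℤ)
    (hiso : Matrix.transpose M * !![2, 0; 0, -2 * e] * M = !![2, 0; 0, -2 * e])
    (hM : 0 < M 0 0) :
    ∃ Φ₀ : (Matrix (Fin 2) (Fin 2) ℤ)ˣ,
      (Φ₀ : Matrix (Fin 2) (Fin 2) ℤ) = !![α₀, e * β₀; β₀, α₀] ∧
      ∃ k : ℤ, M = ((Φ₀ ^ k : (Matrix (Fin 2) (Fin 2) ℤ)ˣ) : Matrix (Fin 2) (Fin 2) ℤ) ∨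
        M = ((Φ₀ ^ k : (Matrix (Fin 2) (Fin 2) ℤ)ˣ) : Matrix (Fin 2) (Fin 2) ℤ) *
          !![1, 0; 0, -1] := by
  let a₀ : Solution₁ e := .mk α₀ β₀ hPell
  let a : Solution₁ e := .mk (M 0 0) (M 1 0) (isometry_entries hiso).1
  obtain ⟨k, hk⟩ :=
    (Solution₁.isFundamental_mk he hα₀ hβ₀ hPell hfund).eq_zpow_of_x_pos (a := a) hM
  let Φ₀ := (Solution₁.matrixHom e).toHomUnits a₀
  have hpow : Solution₁.matrixHom e a = ((Φ₀ ^ k : (Matrix (Fin 2) (Fin 2) ℤ)ˣ) : _) := by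
    rw [← map_zpow, MonoidHom.coe_toHomUnits, hk]
  exact ⟨Φ₀, rfl, k, hpow ▸ isometry_eq_or_eq_mul_diag he.ne' hM.ne' hiso⟩

/-- The group of isometries of `NS(X)` preserving the ample cone (Case 1,
`End(X) = ℤ[√e]`, Gram matrix `G = diag(2, -2e)`) is generated by
`Φ₀ = [[α₀, eβ₀],[β₀, α₀]]` (coming from the fundamental solution `(α₀, β₀)` of
`x² - ey² = 1`) and `T = diag(1, -1)`: every integer matrix `M` with `MᵀGM = G` and
positive top-left entry equals `Φ₀ᵏ` or `Φ₀ᵏ·T` for some `k ∈ ℤ` (here `Φ₀` is regarded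
as a unit of the matrix ring, which it is since `det Φ₀ = 1`). -/
theorem isometry_group_generated (e : ℤ) (he : 0 < e) (hns : ¬ IsSquare e)
    (α₀ β₀ : ℤ) (hα₀ : 0 < α₀) (hβ₀ : 0 < β₀) (hPell : α₀ ^ 2 - e * β₀ ^ 2 = 1)
    (hfund : ∀ α β : ℤ, 0 < α → 0 < β → α ^ 2 - e * β ^ 2 = 1 → α₀ ≤ α)
    (M : Matrix (Fin 2) (Fin 2) ℤ)
    (hiso : Matrix.transpose M * !![2, 0; 0, -2 * e] * M = !![2, 0; 0, -2 * e])
    (hM : 0 < M 0 0) :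
    ∃ Φ₀ : (Matrix (Fin 2) (Fin 2) ℤ)ˣ,
      (Φ₀ : Matrix (Fin 2) (Fin 2) ℤ) = !![α₀, e * β₀; β₀, α₀] ∧
      ∃ k : ℤ, M = ((Φ₀ ^ k : (Matrix (Fin 2) (Fin 2) ℤ)ˣ) : Matrix (Fin 2) (Fin 2) ℤ) ∨
        M = ((Φ₀ ^ k : (Matrix (Fin 2) (Fin 2) ℤ)ˣ) : Matrix (Fin 2) (Fin 2) ℤ) *
          !![1, 0; 0, -1] :=
  isometry_group_generated_general e he α₀ β₀ hα₀ hβ₀ hPell hfund M hiso hM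
end
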